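/- Let 0 < m ≤ L, α ≥ 0, σ ≥ 0, δ ≥ 0, c ≥ 0, and let F : ℝ^p → ℝ^p be a map that is m-strongly monotone (⟨F(x)−F(y), x−y⟩ ≥ m‖x−y‖² for all x,y) and L-Lipschitz (‖F(x)−F(y)‖ ≤ L‖x−y‖ for all x,y). Let x* ∈ ℝ^p satisfy F(x*) = 0, and let x, v, x*' ∈ ℝ^p with ‖x*' − x*‖ ≤ σ and ‖v‖² ≤ δ² ‖F(x)‖² + c². Set x⁺ := x − α(F(x) + v). If there exist nonnegative reals ρ, λ₁, λ₂, λ₃, λ₄ such that the matrix B(ρ,λ₁,λ₂,λ₃,λ₄) is negative semidefinite, then ‖x⁺ − x*'‖² ≤ ρ² ‖x − x*‖² + λ₂ σ² + λ₃ c². -/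

import Mathlib

lemma lmi_vec {p : ℕ} (B : Matrix (Fin 4) (Fin 4) ℝ)
    (h : ∀ z : Fin 4 → ℝ, ∑ k, ∑ l, z k * B k l * z l ≤ 0)
    (u : Fin 4 → EuclideanSpace ℝ (Fin p)) :
    ∑ k, ∑ l, B k l * (inner ℝ (u k) (u l) : ℝ) ≤ 0 := by
  have h1 : ∀ k l, B k l * (inner ℝ (u k) (u l) : ℝ) = ∑ i, u k i * B k l * u l i := by
    intro k l
    rw [PiLp.inner_apply, Finset.mul_sum]
    exact Finset.sum_congr rfl fun i _ => by simp [RCLike.inner_apply]; ring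
  simp_rw [h1]
  rw [Finset.sum_congr rfl fun k _ => Finset.sum_comm,
    Finset.sum_comm]
  exact Finset.sum_nonpos fun i _ => h (fun k => u k i)

set_option maxHeartbeats 1000000 in
theorem stmt_6 (p : ℕ) (m L α σ δ c : ℝ)
    (hm : 0 < m) (hmL : m ≤ L) (hα : 0 ≤ α) (hσ : 0 ≤ σ) (hδ : 0 ≤ δ) (hc : 0 ≤ c)
    (F : EuclideanSpace ℝ (Fin p) → EuclideanSpace ℝ (Fin p))
    (hmono : ∀ x y : EuclideanSpace ℝ (Fin p),
      m * ‖x - y‖ ^ 2 ≤ @inner ℝ _ _ (F x - F y) (x - y))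
    (hlip : ∀ x y : EuclideanSpace ℝ (Fin p), ‖F x - F y‖ ≤ L * ‖x - y‖)
    (xstar : EuclideanSpace ℝ (Fin p)) (hzero : F xstar = 0)
    (x v xstar' : EuclideanSpace ℝ (Fin p))
    (hx' : ‖xstar' - xstar‖ ≤ σ) (hv : ‖v‖ ^ 2 ≤ δ ^ 2 * ‖F x‖ ^ 2 + c ^ 2)
    (ρ l1 l2 l3 l4 : ℝ)
    (hρ : 0 ≤ ρ) (hl1 : 0 ≤ l1) (hl2 : 0 ≤ l2) (hl3 : 0 ≤ l3) (hl4 : 0 ≤ l4)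
    (hLMI : ∀ z : Fin 4 → ℝ,
      ∑ k, ∑ l, z k *
        (!![1 - ρ ^ 2 + l4 * L ^ 2 - 2 * l1 * m, l1 - α, 1, -α;
            l1 - α, α ^ 2 - l4 + δ ^ 2 * l3, -α, α ^ 2;
            1, -α, 1 - l2, -α;
            -α, α ^ 2, -α, α ^ 2 - l3] k l) * z l ≤ 0) :
    ‖(x - α • (F x + v)) - xstar'‖ ^ 2 ≤
      ρ ^ 2 * ‖x - xstar‖ ^ 2 + l2 * σ ^ 2 + l3 * c ^ 2 := by
  set a := x - xstar with ha
  set g := F x with hg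
  set s := xstar - xstar' with hs
  -- the LMI applied to the vectors
  have hQ := lmi_vec _ hLMI ![a, g, s, v]
  simp only [Fin.sum_univ_four, Matrix.cons_val', Matrix.cons_val_zero, Matrix.cons_val_one,
    Matrix.head_cons, Matrix.empty_val', Matrix.cons_val_fin_one, Matrix.head_fin_const,
    Matrix.cons_val_two, Matrix.tail_cons, Matrix.cons_val_three, Matrix.of_apply] at hQ
  -- constraints
  have hmono' : m * ‖a‖ ^ 2 ≤ (inner ℝ g a : ℝ) := by
    have := hmono x xstar
    rwa [hzero, sub_zero] at this
  have hlip' : ‖g‖ ≤ L * ‖a‖ := by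
    have := hlip x xstar
    rwa [hzero, sub_zero] at this
  have hG : (inner ℝ g g : ℝ) ≤ L ^ 2 * (inner ℝ a a : ℝ) := by
    rw [real_inner_self_eq_norm_sq, real_inner_self_eq_norm_sq]
    nlinarith [norm_nonneg a, norm_nonneg g]
  have hS : (inner ℝ s s : ℝ) ≤ σ ^ 2 := by
    rw [real_inner_self_eq_norm_sq]
    have : ‖s‖ ≤ σ := by rwa [hs, ← norm_neg, neg_sub]
    nlinarith [norm_nonneg s]
  have hV : (inner ℝ v v : ℝ) ≤ δ ^ 2 * (inner ℝ g g : ℝ) + c ^ 2 := by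
    rw [real_inner_self_eq_norm_sq, real_inner_self_eq_norm_sq]
    exact hv
  have hA : (inner ℝ a a : ℝ) = ‖a‖ ^ 2 := real_inner_self_eq_norm_sq a
  -- expansion of the error vector
  have hE : (x - α • (F x + v)) - xstar' = a + s - α • g - α • v := by
    rw [ha, hg, hs]; module
  have he : ‖(x - α • (F x + v)) - xstar'‖ ^ 2 =
      (inner ℝ a a : ℝ) + α ^ 2 * inner ℝ g g + inner ℝ s s + α ^ 2 * inner ℝ v v
        - 2 * α * inner ℝ a g + 2 * inner ℝ a s - 2 * α * inner ℝ a v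
        - 2 * α * inner ℝ g s + 2 * α ^ 2 * inner ℝ g v - 2 * α * inner ℝ s v := by
    rw [← real_inner_self_eq_norm_sq, hE]
    simp only [inner_sub_left, inner_sub_right, inner_add_left, inner_add_right,
      real_inner_smul_left, real_inner_smul_right]
    rw [real_inner_comm s a, real_inner_comm g a, real_inner_comm v a,
      real_inner_comm g s, real_inner_comm v s, real_inner_comm v g]
    ring
  rw [he, ← hA]
  nlinarith [hQ, mul_nonneg hl1 (sub_nonneg.2 (hA ▸ hmono')),
    mul_nonneg hl4 (sub_nonneg.2 hG), mul_nonneg hl2 (sub_nonneg.2 hS),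
    mul_nonneg hl3 (sub_nonneg.2 hV),
    real_inner_comm a g, real_inner_comm a s, real_inner_comm a v,
    real_inner_comm g s, real_inner_comm g v, real_inner_comm s v]
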